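/- Let S and T be commuting contractions on a complex Hilbert space H with T pure. Let E be a complex Hilbert space, let G be the closure of the range of D_T and F the closure of the range of D_S, and let V : G → E be a linear isometry. Suppose A ∈ B(E), B ∈ B(F, E), C ∈ B(E, F) are such that the block operator [[A, B], [C, 0]] : E ⊕ F → E ⊕ F is unitary and for all h ∈ H: A(V(D_T h)) + B(D_S T* h) = V(D_T S* h) and C(V(D_T h)) = D_S h. Then for all h ∈ H and all n ∈ ℕ: V(D_T T*ⁿ S* h) = A(V(D_T T*ⁿ h)) + B(C(V(D_T T*^{n+1} h))). Equivalently, the isometry Π_V : H → ℓ²(ℕ, E), (Π_V h)(n) = V(D_T T*ⁿ h), satisfies Π_V ∘ S* = W_{A*, C*B*}* ∘ Π_V, where Φ(z) = A* + z C* B* is the transfer function of the unitary [[A,B],[C,0]]*. -/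

import Mathlib

open ContinuousLinearMap
open scoped ENNReal

set_option linter.unusedSectionVars false

noncomputable section

section ShiftOperator

variable {E : Type*} [NormedAddCommGroup E] [InnerProductSpace ℂ E]

/-- The right-shifted sequence: `(shiftFun f) 0 = 0`, `(shiftFun f) (n+1) = f n`. -/
def shiftFun (f : ℕ → E) : ℕ → E
  | 0 => 0
  | (n + 1) => f n

lemma summable_of_lp (f : lp (fun _ : ℕ => E) 2) :
    Summable fun n => ‖(f : ∀ _ : ℕ, E) n‖ ^ (2 : ℝ) := by
  have h := lp.memℓp f
  have h2 : (0 : ℝ) < (2 : ℝ≥0∞).toReal := by norm_num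
  simpa using (memℓp_gen_iff h2).mp h

lemma summable_shiftFun (f : lp (fun _ : ℕ => E) 2) :
    Summable fun n => ‖shiftFun (f : ∀ _ : ℕ, E) n‖ ^ (2 : ℝ) := by
  have h1 : Summable fun n => ‖shiftFun (f : ∀ _ : ℕ, E) (n + 1)‖ ^ (2 : ℝ) := by
    simpa [shiftFun] using summable_of_lp f
  exact (summable_nat_add_iff
    (f := fun n => ‖shiftFun ((f : ∀ _ : ℕ, E)) n‖ ^ (2 : ℝ)) 1).mp h1

lemma memℓp_shiftFun (f : lp (fun _ : ℕ => E) 2) : Memℓp (shiftFun (f : ∀ _ : ℕ, E)) 2 := by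
  apply memℓp_gen
  simpa using summable_shiftFun f

lemma norm_shift_eq (f : lp (fun _ : ℕ => E) 2)
    (g : lp (fun _ : ℕ => E) 2) (hg : (g : ∀ _ : ℕ, E) = shiftFun (f : ∀ _ : ℕ, E)) :
    ‖g‖ = ‖f‖ := by
  have h2 : (0 : ℝ) < (2 : ℝ≥0∞).toReal := by norm_num
  rw [lp.norm_eq_tsum_rpow h2 f, lp.norm_eq_tsum_rpow h2 g]
  congr 1
  have htsum : (∑' n, ‖shiftFun (f : ∀ _ : ℕ, E) n‖ ^ (2 : ℝ)) =
      ∑' n, ‖(f : ∀ _ : ℕ, E) n‖ ^ (2 : ℝ) := by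
    rw [(summable_shiftFun f).tsum_eq_zero_add]
    simp [shiftFun]
  simp only [hg]
  simpa using htsum

/-- The unilateral shift `S` on `ℓ²(ℕ, E)`: `(S f)(0) = 0` and `(S f)(n) = f (n-1)` for
`n ≥ 1`. -/
def shiftOp (E : Type*) [NormedAddCommGroup E] [InnerProductSpace ℂ E] :
    lp (fun _ : ℕ => E) 2 →L[ℂ] lp (fun _ : ℕ => E) 2 :=
  LinearMap.mkContinuous
    { toFun := fun f => ⟨shiftFun (f : ∀ _ : ℕ, E), memℓp_shiftFun f⟩
      map_add' := by
        intro f g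
        apply lp.ext
        funext n
        show shiftFun ((f + g : lp (fun _ : ℕ => E) 2) : ∀ _ : ℕ, E) n =
          shiftFun (f : ∀ _ : ℕ, E) n + shiftFun (g : ∀ _ : ℕ, E) n
        cases n <;> simp [shiftFun, lp.coeFn_add, Pi.add_apply]
      map_smul' := by
        intro c f
        apply lp.ext
        funext n
        cases n <;> simp [shiftFun, lp.coeFn_smul, Pi.smul_apply] }
    1
    (by
      intro f
      rw [one_mul]
      exact le_of_eq (norm_shift_eq f _ rfl))

@[simp] lemma shiftOp_apply_zero (f : lp (fun _ : ℕ => E) 2) :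
    (shiftOp E f : ∀ _ : ℕ, E) 0 = 0 := rfl

@[simp] lemma shiftOp_apply_succ (f : lp (fun _ : ℕ => E) 2) (n : ℕ) :
    (shiftOp E f : ∀ _ : ℕ, E) (n + 1) = (f : ∀ _ : ℕ, E) n := rfl

end ShiftOperator

section Defect

variable {H : Type*} [NormedAddCommGroup H] [InnerProductSpace ℂ H] [CompleteSpace H]

/-- The defect operator `D_T = (I - T T*)^{1/2}` of a contraction `T`. -/
def defect (T : H →L[ℂ] H) : H →L[ℂ] H :=
  CFC.sqrt (1 - T * adjoint T)

end Defect

section DefectClosure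

variable {H : Type*} [NormedAddCommGroup H] [InnerProductSpace ℂ H] [CompleteSpace H]

/-- The closure of the range of the defect operator of `T`. -/
def defectClos (T : H →L[ℂ] H) : Submodule ℂ H :=
  (LinearMap.range (defect T : H →ₗ[ℂ] H)).topologicalClosure

/-- `D_T x`, viewed as an element of the closure of the range of `D_T`. -/
def defectElem (T : H →L[ℂ] H) (x : H) : defectClos T :=
  ⟨defect T x, Submodule.le_topologicalClosure _ (LinearMap.mem_range_self (defect T : H →ₗ[ℂ] H) x)⟩

instance (T : H →L[ℂ] H) : CompleteSpace (defectClos T) :=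
  (Submodule.isClosed_topologicalClosure _).completeSpace_coe

end DefectClosure

/-- `W` is the analytic (degree-one) Toeplitz operator on `ℓ²(ℕ, E)` with symbol
`φ(z) = a + z b`, i.e. `(W f)(0) = a (f 0)` and `(W f)(n) = a (f n) + b (f (n-1))`
for `n ≥ 1`. -/
def IsToeplitz {E : Type*} [NormedAddCommGroup E] [InnerProductSpace ℂ E]
    (a b : E →L[ℂ] E)
    (W : lp (fun _ : ℕ => E) 2 →L[ℂ] lp (fun _ : ℕ => E) 2) : Prop :=
  ∀ f : lp (fun _ : ℕ => E) 2,
    (W f : ∀ _ : ℕ, E) 0 = a ((f : ∀ _ : ℕ, E) 0) ∧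
    ∀ n : ℕ, (W f : ∀ _ : ℕ, E) (n + 1) =
      a ((f : ∀ _ : ℕ, E) (n + 1)) + b ((f : ∀ _ : ℕ, E) n)

/-!
Moving `S*` past `T*ⁿ` (the adjoints commute), the identity is the hypothesis on `A` and `B`
at the vector `T*ⁿ h`, with `D_S T*ⁿ⁺¹ h` rewritten as `C (V (D_T T*ⁿ⁺¹ h))`. For the operator
form, a Toeplitz operator with symbol `a + z b` maps `e δₙ` to `a e δₙ + b e δₙ₊₁`, so its adjoint
acts coefficientwise by `(W* f)(n) = a* f(n) + b* f(n + 1)`.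
-/

open scoped InnerProductSpace

section Toeplitz

variable {E : Type*} [NormedAddCommGroup E] [InnerProductSpace ℂ E]
  {a b : E →L[ℂ] E} {W : lp (fun _ : ℕ => E) 2 →L[ℂ] lp (fun _ : ℕ => E) 2}

theorem IsToeplitz.apply_single (hW : IsToeplitz a b W) (n : ℕ) (e : E) :
    W (lp.single 2 n e) = lp.single 2 n (a e) + lp.single 2 (n + 1) (b e) := by
  ext (_ | m)
  · simp [(hW _).1, Pi.single_apply, apply_ite a]
  · simp only [(hW _).2, lp.coeFn_add, Pi.add_apply, lp.single_apply, Pi.single_apply,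
      add_left_inj]
    split_ifs <;> simp_all

variable [CompleteSpace E]

theorem IsToeplitz.adjoint_apply (hW : IsToeplitz a b W) (f : lp (fun _ : ℕ => E) 2) (n : ℕ) :
    (adjoint W f : ∀ _ : ℕ, E) n =
      adjoint a ((f : ∀ _ : ℕ, E) n) + adjoint b ((f : ∀ _ : ℕ, E) (n + 1)) := by
  refine ext_inner_left ℂ fun e => ?_
  calc ⟪e, (adjoint W f : ∀ _ : ℕ, E) n⟫_ℂ = ⟪lp.single 2 n e, adjoint W f⟫_ℂ :=
        (lp.inner_single_left (𝕜 := ℂ) n e (adjoint W f)).symm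
    _ = ⟪W (lp.single 2 n e), f⟫_ℂ := adjoint_inner_right W _ f
    _ = ⟪a e, (f : ∀ _ : ℕ, E) n⟫_ℂ + ⟪b e, (f : ∀ _ : ℕ, E) (n + 1)⟫_ℂ := by
        rw [hW.apply_single, inner_add_left, lp.inner_single_left, lp.inner_single_left]
    _ = _ := by rw [inner_add_right, adjoint_inner_right, adjoint_inner_right]

end Toeplitz

theorem Commute.adjoint_pow_apply_adjoint {H : Type*} [NormedAddCommGroup H]
    [InnerProductSpace ℂ H] [CompleteSpace H] {S T : H →L[ℂ] H} (hST : Commute S T) (n : ℕ) (h : H) :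
    (adjoint T ^ n) (adjoint S h) = adjoint S ((adjoint T ^ n) h) := by
  have hcomm : Commute (adjoint T) (adjoint S) := by
    simpa only [star_eq_adjoint] using hST.symm.star_star
  exact congr($((hcomm.pow_left n).eq) h)

theorem key_dilation_identity_general
    {H : Type*} [NormedAddCommGroup H] [InnerProductSpace ℂ H] [CompleteSpace H]
    {E : Type*} [NormedAddCommGroup E] [InnerProductSpace ℂ E] [CompleteSpace E]
    (S T : H →L[ℂ] H) (hST : Commute S T)
    (V : ↥(defectClos T) →L[ℂ] E)
    (A : E →L[ℂ] E) (B : ↥(defectClos S) →L[ℂ] E) (C : E →L[ℂ] ↥(defectClos S))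
    (hU₁ : ∀ h : H,
      A (V (defectElem T h)) + B (defectElem S (adjoint T h)) = V (defectElem T (adjoint S h)))
    (hU₂ : ∀ h : H, C (V (defectElem T h)) = defectElem S h) :
    (∀ (h : H) (n : ℕ),
      V (defectElem T (((adjoint T) ^ n) (adjoint S h))) =
        A (V (defectElem T (((adjoint T) ^ n) h))) +
          B (C (V (defectElem T (((adjoint T) ^ (n + 1)) h))))) ∧
    ∀ (Γ : H →L[ℂ] lp (fun _ : ℕ => E) 2)
      (W : lp (fun _ : ℕ => E) 2 →L[ℂ] lp (fun _ : ℕ => E) 2),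
      (∀ (h : H) (n : ℕ),
        (Γ h : ∀ _ : ℕ, E) n = V (defectElem T (((adjoint T) ^ n) h))) →
      IsToeplitz (adjoint A) (adjoint C ∘L adjoint B) W →
      Γ ∘L adjoint S = adjoint W ∘L Γ := by
  have key : ∀ (h : H) (n : ℕ),
      V (defectElem T (((adjoint T) ^ n) (adjoint S h))) =
        A (V (defectElem T (((adjoint T) ^ n) h))) +
          B (C (V (defectElem T (((adjoint T) ^ (n + 1)) h)))) := by
    intro h n
    rw [hST.adjoint_pow_apply_adjoint, ← hU₁, hU₂, pow_succ', mul_apply_eq_comp]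
  refine ⟨key, fun Γ W hΓ hW => ?_⟩
  ext h n
  rw [comp_apply, comp_apply, hW.adjoint_apply, adjoint_comp, adjoint_adjoint, adjoint_adjoint,
    adjoint_adjoint, comp_apply, hΓ, hΓ, hΓ, key]

/-- Key dilation identity (Theorem 2.2 of the paper). Let `S, T` be commuting contractions
with `T` pure, let `V : G → E` be an isometry from the closure `G` of the range of `D_T`,
and suppose `[[A, B], [C, 0]] : E ⊕ F → E ⊕ F` is unitary (where `F` is the closure of the
range of `D_S`), with `A (V (D_T h)) + B (D_S T* h) = V (D_T S* h)` and
`C (V (D_T h)) = D_S h` for all `h`. Then `V (D_T T*ⁿ S* h) = A (V (D_T T*ⁿ h)) +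
B (C (V (D_T T*ⁿ⁺¹ h)))`; equivalently, the isometry `Γ_V : H → ℓ²(ℕ, E)`,
`(Γ_V h)(n) = V (D_T T*ⁿ h)`, satisfies `Γ_V ∘ S* = W* ∘ Γ_V` for the Toeplitz operator
`W` with symbol `Φ(z) = A* + z C* B*`. -/
theorem key_dilation_identity
    {H : Type*} [NormedAddCommGroup H] [InnerProductSpace ℂ H] [CompleteSpace H]
    {E : Type*} [NormedAddCommGroup E] [InnerProductSpace ℂ E] [CompleteSpace E]
    (S T : H →L[ℂ] H) (hS : ‖S‖ ≤ 1) (hT : ‖T‖ ≤ 1) (hST : Commute S T)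
    (hpure : ∀ h : H,
      Filter.Tendsto (fun n : ℕ => ((adjoint T) ^ n) h) Filter.atTop (nhds 0))
    (V : ↥(defectClos T) →L[ℂ] E) (hV : Isometry V)
    (A : E →L[ℂ] E) (B : ↥(defectClos S) →L[ℂ] E) (C : E →L[ℂ] ↥(defectClos S))
    (hc₁ : adjoint A ∘L A + adjoint C ∘L C = 1)
    (hc₂ : adjoint B ∘L B = 1)
    (hc₃ : adjoint A ∘L B = 0)
    (hr₁ : A ∘L adjoint A + B ∘L adjoint B = 1)
    (hr₂ : C ∘L adjoint C = 1)
    (hr₃ : A ∘L adjoint C = 0)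
    (hU₁ : ∀ h : H,
      A (V (defectElem T h)) + B (defectElem S (adjoint T h)) = V (defectElem T (adjoint S h)))
    (hU₂ : ∀ h : H, C (V (defectElem T h)) = defectElem S h) :
    (∀ (h : H) (n : ℕ),
      V (defectElem T (((adjoint T) ^ n) (adjoint S h))) =
        A (V (defectElem T (((adjoint T) ^ n) h))) +
          B (C (V (defectElem T (((adjoint T) ^ (n + 1)) h))))) ∧
    ∀ (Γ : H →L[ℂ] lp (fun _ : ℕ => E) 2)
      (W : lp (fun _ : ℕ => E) 2 →L[ℂ] lp (fun _ : ℕ => E) 2),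
      (∀ (h : H) (n : ℕ),
        (Γ h : ∀ _ : ℕ, E) n = V (defectElem T (((adjoint T) ^ n) h))) →
      IsToeplitz (adjoint A) (adjoint C ∘L adjoint B) W →
      Γ ∘L adjoint S = adjoint W ∘L Γ :=
  key_dilation_identity_general S T hST V A B C hU₁ hU₂
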